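/- For n ≥ 2 and every 0 < i ≤ 2^r with binary expansion i = 2^{k_0} + 2^{k_1} + ⋯ + 2^{k_s}, where k_0 > k_1 > ⋯ > k_s ≥ 0: N_r(i) = Σ_{j=0}^{s} n^{k_j}·(n−1)^j. -/

import Mathlib

/-!
Let `binaryEval n` send `i = 2^{k₀} + ⋯ + 2^{k_s}` (with `k₀ > ⋯ > k_s`) to
`∑ⱼ n^{kⱼ} (n-1)^j`; equivalently `binaryEval n (2^k + t) = n^k + (n-1) · binaryEval n t` for
`t < 2^k`. Reading `σ ∈ Ψ_r` as binary digits (`∨ = 1`, `∧ = 0`) followed by a final `1` gives an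
index in `(0, 2^r)`, and splitting an edge into its first coordinate and the rest shows that
`f_r(σ)` obeys the same recursion: for `σ = ∨ :: σ'` every edge through `v₁` counts, and each of the
other `n - 1` first coordinates contributes `f_{r-1}(σ')`, while `∧` keeps only the edges through
`v₁`. Hence the values `f_r(σ)`, together with `0` and `n^r`, are the image of `[0, 2^r]` under
`binaryEval n`, which is strictly increasing for `n ≥ 2`; so `N_r(i) = binaryEval n i`.
-/

/-- Whether the `j`-th coordinate of the edge `e` equals the distinguished vertex
(the first vertex of its side, representing `v_{j+1} = 1`). -/
def vcond {n r : ℕ} (e : Fin r → Fin n) (j : ℕ) : Bool :=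
  if h : j < r then decide ((e ⟨j, h⟩ : ℕ) = 0) else false

/-- The nested condition `v_{j+1} ∈ e σ₁ (v_{j+2} ∈ e σ₂ (⋯))` determined by a
sequence `σ` over `{∧, ∨}` (where `false` encodes `∧` and `true` encodes `∨`). -/
def edgeCond {n r : ℕ} (e : Fin r → Fin n) : ℕ → List Bool → Bool
  | j, [] => vcond e j
  | j, false :: s => vcond e j && edgeCond e (j + 1) s
  | j, true :: s => vcond e j || edgeCond e (j + 1) s

/-- `F_r(σ)`: the set of edges of `[n]^r` satisfying the nested condition given by `σ`. -/
def Fset (n r : ℕ) (σ : List Bool) : Finset (Fin r → Fin n) :=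
  Finset.univ.filter (fun e => edgeCond e 0 σ = true)

/-- `f_r(σ) = |F_r(σ)|`. -/
def fval (n r : ℕ) (σ : List Bool) : ℕ := (Fset n r σ).card

/-- `Ψ_r`: the sequences over `{∧, ∨}` of length at most `r - 1`. -/
def PsiSet (r : ℕ) : Finset (List Bool) :=
  (Finset.range r).biUnion (fun m => (Finset.univ : Finset (Fin m → Bool)).image List.ofFn)

/-- The set of values `{f_r(σ) : σ ∈ Σ_r}`, where `f_r(α) = 0` and `f_r(ω) = n ^ r`. -/
def Nvals (n r : ℕ) : Finset ℕ :=
  insert 0 (insert (n ^ r) ((PsiSet r).image (fval n r)))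

/-- `N_r(i)`: the `(i+1)`-st smallest element of `{f_r(σ) : σ ∈ Σ_r}`. -/
def Nseq (n r i : ℕ) : ℕ := (Finset.sort (Nvals n r) (· ≤ ·)).getD i 0

open Finset

lemma card_filter_fin_cons {α : Type*} [Fintype α] {r : ℕ} (p : (Fin (r + 1) → α) → Prop)
    [DecidablePred p] :
    #{e | p e} = ∑ x : α, #{f : Fin r → α | p (Fin.cons x f)} := by
  rw [← card_sigma]
  refine card_equiv ((Equiv.sigmaEquivProd _ _).trans (Fin.consEquiv fun _ => α)).symm ?_
  simp

section Hypergraph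

variable {n r : ℕ}

@[simp]
lemma vcond_cons_zero (x : Fin n) (f : Fin r → Fin n) :
    vcond (Fin.cons x f : Fin (r + 1) → Fin n) 0 = decide ((x : ℕ) = 0) := by
  simp [vcond]

@[simp]
lemma vcond_cons_succ (x : Fin n) (f : Fin r → Fin n) (j : ℕ) :
    vcond (Fin.cons x f : Fin (r + 1) → Fin n) (j + 1) = vcond f j := by
  by_cases h : j < r
  · simp only [vcond, h, Nat.add_lt_add_iff_right, dite_true]
    rfl
  · simp [vcond, h]

@[simp]
lemma edgeCond_cons_succ (x : Fin n) (f : Fin r → Fin n) (j : ℕ) (σ : List Bool) :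
    edgeCond (Fin.cons x f : Fin (r + 1) → Fin n) (j + 1) σ = edgeCond f j σ := by
  induction σ generalizing j with
  | nil => exact vcond_cons_succ x f j
  | cons b σ ih => cases b <;> simp [edgeCond, ih]

lemma fval_succ (m : ℕ) (σ : List Bool) :
    fval (m + 1) (r + 1) σ = #{f : Fin r → Fin (m + 1) | edgeCond (Fin.cons 0 f) 0 σ} +
      ∑ i : Fin m, #{f : Fin r → Fin (m + 1) | edgeCond (Fin.cons i.succ f) 0 σ} := by
  rw [fval, Fset, card_filter_fin_cons, Fin.sum_univ_succ]

variable [NeZero n]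

lemma fval_nil : fval n (r + 1) [] = n ^ r := by
  obtain ⟨m, rfl⟩ := Nat.exists_eq_add_one_of_ne_zero (NeZero.ne n)
  simp [fval_succ, edgeCond]

lemma fval_false_cons (σ : List Bool) : fval n (r + 1) (false :: σ) = fval n r σ := by
  obtain ⟨m, rfl⟩ := Nat.exists_eq_add_one_of_ne_zero (NeZero.ne n)
  rw [fval_succ]
  simp [edgeCond, fval, Fset]

lemma fval_true_cons (σ : List Bool) :
    fval n (r + 1) (true :: σ) = n ^ r + (n - 1) * fval n r σ := by
  obtain ⟨m, rfl⟩ := Nat.exists_eq_add_one_of_ne_zero (NeZero.ne n)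
  rw [fval_succ]
  simp [edgeCond, fval, Fset]

end Hypergraph

def binaryEval (n : ℕ) : ℕ → ℕ
  | 0 => 0
  | i + 1 => n ^ Nat.log 2 (i + 1) + (n - 1) * binaryEval n (i + 1 - 2 ^ Nat.log 2 (i + 1))
decreasing_by have := Nat.one_le_two_pow (n := Nat.log 2 (i + 1)); omega

namespace binaryEval

variable {n : ℕ}

lemma two_pow_add {k t : ℕ} (ht : t < 2 ^ k) :
    binaryEval n (2 ^ k + t) = n ^ k + (n - 1) * binaryEval n t := by
  have hlog : Nat.log 2 (2 ^ k + t) = k :=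
    Nat.log_eq_of_pow_le_of_lt_pow (by omega) (by rw [pow_succ]; omega)
  obtain ⟨i, hi⟩ : ∃ i, 2 ^ k + t = i + 1 :=
    ⟨2 ^ k + t - 1, by have := Nat.one_le_two_pow (n := k); omega⟩
  rw [hi, binaryEval, ← hi, hlog, Nat.add_sub_cancel_left]

lemma two_pow (k : ℕ) : binaryEval n (2 ^ k) = n ^ k := by
  simpa [binaryEval] using two_pow_add (n := n) (t := 0) (Nat.two_pow_pos k)

lemma two_pow_add_of_le [NeZero n] {k t : ℕ} (ht : t ≤ 2 ^ k) :
    binaryEval n (2 ^ k + t) = n ^ k + (n - 1) * binaryEval n t := by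
  rcases ht.lt_or_eq with ht | rfl
  · exact two_pow_add ht
  · obtain ⟨m, rfl⟩ := Nat.exists_eq_add_one_of_ne_zero (NeZero.ne n)
    rw [← two_mul, ← pow_succ', two_pow, two_pow, Nat.add_sub_cancel]
    ring

lemma lt_of_lt_of_le_two_pow (hn : 2 ≤ n) {a b : ℕ} (k : ℕ) (hab : a < b) (hb : b ≤ 2 ^ k) :
    binaryEval n a < binaryEval n b := by
  have : NeZero n := ⟨by omega⟩
  induction k generalizing a b with
  | zero =>
    obtain ⟨rfl, rfl⟩ : a = 0 ∧ b = 1 := by rw [pow_zero] at hb; omega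
    simp [binaryEval]
  | succ k ih =>
    rcases le_or_gt b (2 ^ k) with hbk | hbk
    · exact ih hab hbk
    obtain ⟨t, rfl⟩ := Nat.exists_eq_add_of_le hbk.le
    have ht : t ≤ 2 ^ k := by rw [pow_succ] at hb; omega
    rw [two_pow_add_of_le ht]
    rcases lt_or_ge a (2 ^ k) with hak | hak
    · calc binaryEval n a < binaryEval n (2 ^ k) := ih hak le_rfl
        _ = n ^ k := two_pow k
        _ ≤ _ := Nat.le_add_right _ _
    · obtain ⟨s, rfl⟩ := Nat.exists_eq_add_of_le hak
      rw [two_pow_add_of_le (by omega)]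
      have := ih (a := s) (b := t) (by omega) ht
      gcongr
      omega

lemma strictMono (hn : 2 ≤ n) : StrictMono (binaryEval n) := fun _ b hab =>
  lt_of_lt_of_le_two_pow hn b hab Nat.lt_two_pow_self.le

end binaryEval

lemma sum_two_pow_getD_lt {L : List ℕ} {k : ℕ} (hL : L.Pairwise (· > ·)) (hk : ∀ x ∈ L, x < k) :
    ∑ j ∈ range L.length, 2 ^ L.getD j 0 < 2 ^ k := by
  induction L generalizing k with
  | nil => simp
  | cons a L ih =>
    rw [List.pairwise_cons] at hL
    have hrest := ih hL.2 hL.1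
    have hak : 2 ^ (a + 1) ≤ 2 ^ k := Nat.pow_le_pow_right two_pos (hk a (by simp))
    rw [List.length_cons, sum_range_succ']
    simp only [List.getD_cons_succ, List.getD_cons_zero]
    rw [pow_succ] at hak
    omega

lemma binaryEval_sum_two_pow (n : ℕ) {L : List ℕ} (hL : L.Pairwise (· > ·)) :
    binaryEval n (∑ j ∈ range L.length, 2 ^ L.getD j 0) =
      ∑ j ∈ range L.length, n ^ L.getD j 0 * (n - 1) ^ j := by
  induction L with
  | nil => simp [binaryEval]
  | cons a L ih =>
    rw [List.pairwise_cons] at hL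
    simp only [List.length_cons, sum_range_succ', List.getD_cons_succ, List.getD_cons_zero]
    rw [add_comm, binaryEval.two_pow_add (sum_two_pow_getD_lt hL.2 hL.1), ih hL.2, mul_sum,
      pow_zero, mul_one, add_comm]
    congr 1
    exact sum_congr rfl fun j _ => by ring

lemma mem_PsiSet {r : ℕ} {σ : List Bool} : σ ∈ PsiSet r ↔ σ.length < r := by
  simp only [PsiSet, mem_biUnion, mem_range, mem_image, mem_univ, true_and]
  constructor
  · rintro ⟨m, hm, f, rfl⟩
    simpa using hm
  · exact fun h => ⟨σ.length, h, σ.get, List.ofFn_get σ⟩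

def binaryIndex : ℕ → List Bool → ℕ
  | r, [] => 2 ^ (r - 1)
  | r, b :: σ => (if b then 2 ^ (r - 1) else 0) + binaryIndex (r - 1) σ

lemma binaryIndex_mem_Ioo {r : ℕ} {σ : List Bool} (hσ : σ.length < r) :
    binaryIndex r σ ∈ Ioo 0 (2 ^ r) := by
  induction σ generalizing r with
  | nil =>
    obtain ⟨r, rfl⟩ := Nat.exists_eq_add_one_of_ne_zero (Nat.ne_zero_of_lt hσ)
    simp [binaryIndex, pow_succ]
  | cons b σ ih =>
    obtain ⟨r, rfl⟩ := Nat.exists_eq_add_one_of_ne_zero (Nat.ne_zero_of_lt hσ)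
    have := mem_Ioo.mp (ih (r := r) (by simpa using hσ))
    rw [mem_Ioo, pow_succ]
    cases b <;> simp only [binaryIndex, Bool.false_eq_true, if_true, if_false,
      Nat.add_sub_cancel] <;> omega

lemma exists_binaryIndex_eq {r i : ℕ} (hi : i ∈ Ioo 0 (2 ^ r)) :
    ∃ σ : List Bool, σ.length < r ∧ binaryIndex r σ = i := by
  induction r generalizing i with
  | zero => simp at hi; omega
  | succ r ih =>
    rw [mem_Ioo, pow_succ] at hi
    rcases lt_trichotomy i (2 ^ r) with h | rfl | h
    · obtain ⟨σ, hσ, rfl⟩ := ih (mem_Ioo.mpr ⟨hi.1, h⟩)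
      exact ⟨false :: σ, by simpa using hσ, by simp [binaryIndex]⟩
    · exact ⟨[], by simp, by simp [binaryIndex]⟩
    · obtain ⟨σ, hσ, hσi⟩ := ih (i := i - 2 ^ r) (mem_Ioo.mpr ⟨by omega, by omega⟩)
      refine ⟨true :: σ, by simpa using hσ, ?_⟩
      simp only [binaryIndex, if_true, Nat.add_sub_cancel, hσi]
      omega

lemma fval_eq_binaryEval_binaryIndex {n r : ℕ} [NeZero n] {σ : List Bool} (hσ : σ.length < r) :
    fval n r σ = binaryEval n (binaryIndex r σ) := by
  induction σ generalizing r with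
  | nil =>
    obtain ⟨r, rfl⟩ := Nat.exists_eq_add_one_of_ne_zero (Nat.ne_zero_of_lt hσ)
    simp [binaryIndex, fval_nil, binaryEval.two_pow]
  | cons b σ ih =>
    obtain ⟨r, rfl⟩ := Nat.exists_eq_add_one_of_ne_zero (Nat.ne_zero_of_lt hσ)
    have hσ' : σ.length < r := by simpa using hσ
    cases b
    · simp [binaryIndex, fval_false_cons, ih hσ']
    · simp only [binaryIndex, fval_true_cons, ih hσ', if_true, Nat.add_sub_cancel]
      rw [binaryEval.two_pow_add (mem_Ioo.mp (binaryIndex_mem_Ioo hσ')).2]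

lemma Nvals_eq_image_range {n r : ℕ} [NeZero n] :
    Nvals n r = (range (2 ^ r + 1)).image (binaryEval n) := by
  ext x
  simp only [Nvals, mem_insert, mem_image, mem_PsiSet, mem_range]
  constructor
  · rintro (rfl | rfl | ⟨σ, hσ, rfl⟩)
    · exact ⟨0, Nat.succ_pos _, by simp [binaryEval]⟩
    · exact ⟨2 ^ r, Nat.lt_succ_self _, binaryEval.two_pow r⟩
    · exact ⟨binaryIndex r σ, by have := mem_Ioo.mp (binaryIndex_mem_Ioo hσ); omega,
        (fval_eq_binaryEval_binaryIndex hσ).symm⟩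
  · rintro ⟨i, hi, rfl⟩
    rcases Nat.eq_zero_or_pos i with rfl | hi0
    · simp [binaryEval]
    rcases (Nat.lt_succ_iff.mp hi).lt_or_eq with hir | rfl
    · obtain ⟨σ, hσ, rfl⟩ := exists_binaryIndex_eq (mem_Ioo.mpr ⟨hi0, hir⟩)
      exact Or.inr (Or.inr ⟨σ, hσ, fval_eq_binaryEval_binaryIndex hσ⟩)
    · exact Or.inr (Or.inl (binaryEval.two_pow r))

lemma Nseq_eq_binaryEval {n r i : ℕ} (hn : 2 ≤ n) (hi : i ≤ 2 ^ r) :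
    Nseq n r i = binaryEval n i := by
  have : NeZero n := ⟨by omega⟩
  let g : ℕ ↪ ℕ := ⟨binaryEval n, (binaryEval.strictMono hn).injective⟩
  have hg : (range (2 ^ r + 1)).image (binaryEval n) = (range (2 ^ r + 1)).map g :=
    (map_eq_image g _).symm
  rw [Nseq, Nvals_eq_image_range, hg,
    ← ((binaryEval.strictMono hn).strictMonoOn _).map_finsetSort (f := g), sort_range,
    List.getD_eq_getElem _ _ (by simp only [List.length_map, List.length_range]; omega)]
  simp [g]

theorem stmt13_general (n r : ℕ) (hn : 2 ≤ n) (L : List ℕ) (hL : L.Pairwise (· > ·))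
    (hle : ∑ j ∈ Finset.range L.length, 2 ^ L.getD j 0 ≤ 2 ^ r) :
    Nseq n r (∑ j ∈ Finset.range L.length, 2 ^ L.getD j 0) =
      ∑ j ∈ Finset.range L.length, n ^ L.getD j 0 * (n - 1) ^ j := by
  rw [Nseq_eq_binaryEval hn hle, binaryEval_sum_two_pow n hL]

theorem stmt13 (n r : ℕ) (hn : 2 ≤ n) (L : List ℕ) (hL : L.Pairwise (· > ·))
    (hpos : 0 < ∑ j ∈ Finset.range L.length, 2 ^ L.getD j 0)
    (hle : ∑ j ∈ Finset.range L.length, 2 ^ L.getD j 0 ≤ 2 ^ r) :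
    Nseq n r (∑ j ∈ Finset.range L.length, 2 ^ L.getD j 0) =
      ∑ j ∈ Finset.range L.length, n ^ L.getD j 0 * (n - 1) ^ j :=
  stmt13_general n r hn L hL hle
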